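/- arXiv:2604.11761 — 3 statements merged into one kernel-verified Lean document; each statement's English description precedes it below -/
import Mathlib

section
/- There exist absolute constants C₃, c₃ > 0 such that the following holds. Let n be an even positive integer and let M be an m×n random matrix, 1 ≤ m ≤ n, whose rows are independent, each uniformly distributed over the set of vectors in {-1,0,1}^n having exactly n/2 zero coordinates. Then for all t ≥ C₃, P( ‖M‖ ≥ t√n ) ≤ 2 exp(−c₃ t² n), where ‖M‖ = sup_{v ∈ S^{n-1}} ‖Mv‖₂ is the operator norm. -/
open MeasureTheory ProbabilityTheory Real

noncomputable section

/-- Euclidean norm of a finitely indexed real vector. -/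
def pnorm {ι : Type*} [Fintype ι] (x : ι → ℝ) : ℝ := Real.sqrt (∑ i, x i ^ 2)

/-- The set of "signed rows": vectors in `{-1,0,1}^n` with exactly `n/2` zero coordinates. -/
def signedRow (n : ℕ) : Set (Fin n → ℝ) :=
  {v | (∀ i, v i = -1 ∨ v i = 0 ∨ v i = 1) ∧ Nat.card {i : Fin n // v i = 0} = n / 2}

/-- The operator norm `‖M‖ = sup_{‖v‖₂ = 1} ‖Mv‖₂` of an `m × n` real matrix. -/
def opNorm {m n : ℕ} (M : Matrix (Fin m) (Fin n) ℝ) : ℝ :=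
  ⨆ v : {v : Fin n → ℝ // pnorm v = 1}, pnorm (M.mulVec v)

/-!
Cover the unit spheres of `ℝᵐ` and `ℝⁿ` by `1/4`-nets of sizes at most `9ᵐ` and `9ⁿ` (a volume
argument); then `‖M‖ ≤ 2 max ⟪u, M v⟫` over net points `u, v`. For fixed unit vectors,
`⟪u, M v⟫ = ∑ᵢ ⟪Mᵢ, uᵢ v⟫` is a sum of independent terms, and each term is sub-Gaussian with
variance proxy `uᵢ² ‖v‖²` because the law of a row is invariant under flipping the sign of any
coordinate. Hoeffding's inequality gives `P(⟪u, M v⟫ ≥ s) ≤ exp (-s² / 2)`, and a union bound over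
the `81ⁿ` pairs with `s = t √n / 3` concludes.
-/

open Metric Module Finset
open scoped ENNReal NNReal RealInnerProductSpace

section Nets

variable {E : Type*} [NormedAddCommGroup E] [NormedSpace ℝ E] [FiniteDimensional ℝ E]

-- Volume comparison: the balls of radius `1/8` around the points are disjoint and lie in the
-- ball of radius `9/8`.
lemma Finset.card_le_nine_pow_of_isSeparated {C : Finset E} (hC : (C : Set E) ⊆ closedBall 0 1)
    (hsep : IsSeparated ((1 / 4 : ℝ≥0) : ℝ≥0∞) (C : Set E)) : #C ≤ 9 ^ finrank ℝ E := by
  let _ : MeasurableSpace E := borel E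
  have : BorelSpace E := ⟨rfl⟩
  set μ : Measure E := Measure.addHaar
  set V := μ (closedBall 0 (1 / 8))
  have hdisj : (C : Set E).PairwiseDisjoint fun x => closedBall x (1 / 8) := by
    intro x hx y hy hxy
    refine Set.disjoint_left.2 fun z hzx hzy => ?_
    have hxy' : (1 / 4 : ℝ) < dist x y := by
      have h : ((1 / 4 : ℝ≥0) : ℝ≥0∞) < edist x y := hsep hx hy hxy
      rw [edist_nndist, ENNReal.coe_lt_coe, ← NNReal.coe_lt_coe, coe_nndist] at h
      exact_mod_cast h
    rw [mem_closedBall] at hzx hzy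
    linarith [dist_triangle_left x y z]
  have hsub : (⋃ x ∈ C, closedBall x (1 / 8)) ⊆ closedBall (0 : E) (9 * (1 / 8)) := by
    refine Set.iUnion₂_subset fun x hx z hz => ?_
    rw [mem_closedBall] at hz ⊢
    have := hC hx
    rw [mem_closedBall] at this
    linarith [dist_triangle z x 0]
  have hV : V ≠ 0 := (measure_closedBall_pos μ 0 (by norm_num)).ne'
  have hV' : V ≠ ⊤ := measure_closedBall_lt_top.ne
  have key : (#C : ℝ≥0∞) * V ≤ 9 ^ finrank ℝ E * V := calc
    (#C : ℝ≥0∞) * V = μ (⋃ x ∈ C, closedBall x (1 / 8)) := by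
      rw [measure_biUnion_finset hdisj fun _ _ => measurableSet_closedBall]
      simp [V, Measure.addHaar_closedBall_center]
    _ ≤ μ (closedBall 0 (9 * (1 / 8))) := measure_mono hsub
    _ = 9 ^ finrank ℝ E * V := by
      rw [Measure.addHaar_closedBall_mul μ 0 (by norm_num) (by norm_num)]
      simp [V, ENNReal.ofReal_pow]
  exact_mod_cast (ENNReal.mul_le_mul_iff_left hV hV').1 key

lemma Set.encard_le_nine_pow_of_isSeparated {C : Set E} (hC : C ⊆ closedBall 0 1)
    (hsep : IsSeparated ((1 / 4 : ℝ≥0) : ℝ≥0∞) C) : C.encard ≤ 9 ^ finrank ℝ E := by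
  by_contra! hlt
  obtain ⟨D, hDC, hD⟩ := Set.exists_subset_encard_eq (Order.add_one_le_of_lt hlt)
  have hDfin : D.Finite := Set.finite_of_encard_eq_coe hD
  have := Finset.card_le_nine_pow_of_isSeparated (C := hDfin.toFinset) (by simpa using hDC.trans hC)
    (by simpa using hsep.subset hDC)
  rw [hDfin.encard_eq_coe_toFinset_card] at hD
  norm_cast at hD
  omega

lemma exists_finset_isCover_sphere : ∃ N : Finset E, (N : Set E) ⊆ sphere 0 1 ∧
    #N ≤ 9 ^ finrank ℝ E ∧ IsCover (1 / 4) (sphere (0 : E) 1) N := by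
  have hpack : packingNumber (1 / 4) (sphere (0 : E) 1) ≤ 9 ^ finrank ℝ E :=
    iSup₂_le fun C hC => iSup_le fun hsep =>
      Set.encard_le_nine_pow_of_isSeparated (hC.trans sphere_subset_closedBall) hsep
  have hfin : packingNumber (1 / 4) (sphere (0 : E) 1) ≠ ⊤ := ne_top_of_le_ne_top (by simp) hpack
  set S := maximalSeparatedSet (1 / 4) (sphere (0 : E) 1)
  have hS : S.encard ≤ 9 ^ finrank ℝ E := encard_maximalSeparatedSet hfin ▸ hpack
  have hSfin : S.Finite := Set.finite_of_encard_le_coe hS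
  refine ⟨hSfin.toFinset, by simpa [S] using maximalSeparatedSet_subset, ?_, by
    simpa [S] using isCover_maximalSeparatedSet hfin⟩
  rw [hSfin.encard_eq_coe_toFinset_card] at hS
  exact_mod_cast hS

end Nets

section OperatorNorm

variable {E F : Type*} [NormedAddCommGroup E] [NormedSpace ℝ E]
  [NormedAddCommGroup F] [InnerProductSpace ℝ F]

lemma norm_le_of_forall_sphere_inner_le {w : F} {K : ℝ} (hK : 0 ≤ K)
    (h : ∀ u ∈ sphere (0 : F) 1, ⟪u, w⟫ ≤ K) : ‖w‖ ≤ K := by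
  rcases eq_or_ne w 0 with rfl | hw
  · simpa using hK
  have hu : ‖w‖⁻¹ • w ∈ sphere (0 : F) 1 := by simp [norm_smul, hw]
  have := h _ hu
  rwa [real_inner_smul_left, real_inner_self_eq_norm_sq, sq,
    inv_mul_cancel_left₀ (norm_ne_zero_iff.2 hw)] at this

lemma exists_dist_le_of_isCover {X : Type*} [PseudoMetricSpace X] {ε : ℝ≥0} {s N : Set X}
    (hN : IsCover ε s N) {x : X} (hx : x ∈ s) : ∃ y ∈ N, dist x y ≤ ε := by
  simpa using isCover_iff_subset_iUnion_closedBall.1 hN hx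

-- Write `⟪u, A v⟫ = ⟪u₀, A v₀⟫ + ⟪u - u₀, A v⟫ + ⟪u₀, A (v - v₀)⟫`; the last two terms are
-- at most `‖A‖ / 4` each.
lemma ContinuousLinearMap.opNorm_le_two_mul_of_isCover (A : E →L[ℝ] F) {NE : Set E} {NF : Set F}
    (hNE : IsCover (1 / 4) (sphere 0 1) NE) (hNF : IsCover (1 / 4) (sphere 0 1) NF)
    (hNF_sub : NF ⊆ sphere 0 1) {K : ℝ} (hK : 0 ≤ K) (h : ∀ u ∈ NF, ∀ v ∈ NE, ⟪u, A v⟫ ≤ K) :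
    ‖A‖ ≤ 2 * K := by
  have hbil : ∀ u ∈ sphere (0 : F) 1, ∀ v ∈ sphere (0 : E) 1, ⟪u, A v⟫ ≤ K + ‖A‖ / 2 := by
    intro u hu v hv
    obtain ⟨u₀, hu₀, huu₀⟩ := exists_dist_le_of_isCover hNF hu
    obtain ⟨v₀, hv₀, hvv₀⟩ := exists_dist_le_of_isCover hNE hv
    rw [mem_sphere_zero_iff_norm] at hu hv
    rw [dist_eq_norm] at huu₀ hvv₀
    have hu₀1 : ‖u₀‖ = 1 := mem_sphere_zero_iff_norm.1 (hNF_sub hu₀)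
    have h₁ : ⟪u - u₀, A v⟫ ≤ ‖A‖ / 4 := calc
      ⟪u - u₀, A v⟫ ≤ ‖u - u₀‖ * (‖A‖ * ‖v‖) :=
        (real_inner_le_norm _ _).trans (by gcongr; exact A.le_opNorm v)
      _ ≤ 1 / 4 * (‖A‖ * 1) := by rw [hv]; gcongr; simpa using huu₀
      _ = ‖A‖ / 4 := by ring
    have h₂ : ⟪u₀, A (v - v₀)⟫ ≤ ‖A‖ / 4 := calc
      ⟪u₀, A (v - v₀)⟫ ≤ ‖u₀‖ * (‖A‖ * ‖v - v₀‖) :=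
        (real_inner_le_norm _ _).trans (by gcongr; exact A.le_opNorm _)
      _ ≤ 1 * (‖A‖ * (1 / 4)) := by rw [hu₀1]; gcongr; simpa using hvv₀
      _ = ‖A‖ / 4 := by ring
    have hsplit : ⟪u, A v⟫ = ⟪u₀, A v₀⟫ + ⟪u - u₀, A v⟫ + ⟪u₀, A (v - v₀)⟫ := by
      simp only [map_sub, inner_sub_left, inner_sub_right]
      ring
    linarith [h u₀ hu₀ v₀ hv₀]
  have : ‖A‖ ≤ K + ‖A‖ / 2 := A.opNorm_le_of_unit_norm (by positivity) fun v hv =>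
    norm_le_of_forall_sphere_inner_le (by positivity) fun u hu => hbil u hu v (by simpa using hv)
  linarith

end OperatorNorm

section UniformOnFinset

variable {α : Type*} [MeasurableSpace α] [MeasurableSingletonClass α]

lemma restrict_uniformOn_finset (F : Finset α) :
    (uniformOn (F : Set α)).restrict F = uniformOn (F : Set α) :=
  Measure.restrict_eq_self_of_ae_mem (ae_cond_mem F.measurableSet)

lemma integrable_uniformOn_finset (F : Finset α) (f : α → ℝ) :
    Integrable f (uniformOn (F : Set α)) := by
  rw [← restrict_uniformOn_finset]
  exact IntegrableOn.finset

lemma integral_uniformOn_finset (F : Finset α) (f : α → ℝ) :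
    ∫ x, f x ∂uniformOn (F : Set α) = (#F : ℝ)⁻¹ * ∑ x ∈ F, f x := by
  classical
  rw [← restrict_uniformOn_finset, setIntegral_finset F IntegrableOn.finset,
    Finset.mul_sum]
  refine Finset.sum_congr rfl fun x hx => ?_
  rw [measureReal_def, ← Finset.coe_singleton, uniformOn_apply_finset,
    Finset.inter_singleton_of_mem hx]
  simp

lemma hasSubgaussianMGF_uniformOn_finset {F : Finset α} {X : α → ℝ} {c : ℝ≥0}
    (h : ∀ t : ℝ, ∑ x ∈ F, exp (t * X x) ≤ #F * exp (c * t ^ 2 / 2)) :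
    HasSubgaussianMGF X c (uniformOn (F : Set α)) where
  integrable_exp_mul _ := integrable_uniformOn_finset F _
  mgf_le t := by
    rw [mgf, integral_uniformOn_finset]
    rcases F.eq_empty_or_nonempty with rfl | hF
    · simp [exp_nonneg]
    rw [inv_mul_le_iff₀ (by exact_mod_cast hF.card_pos)]
    exact h t

end UniformOnFinset

section SignFlips

variable {ι : Type*} [DecidableEq ι]

-- Flipping the sign of a coordinate `j₀ ∈ A` is an involution of `F` that negates the summand.
lemma sum_prod_eq_zero_of_update_neg_mem {F : Finset (ι → ℝ)}
    (hF : ∀ x ∈ F, ∀ j, Function.update x j (-x j) ∈ F) {A : Finset ι} (hA : A.Nonempty) :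
    ∑ x ∈ F, ∏ j ∈ A, x j = 0 := by
  obtain ⟨j₀, hj₀⟩ := hA
  set φ : (ι → ℝ) → ι → ℝ := fun x => Function.update x j₀ (-x j₀)
  have hφφ : ∀ x, φ (φ x) = x := fun x => by simp [φ]
  have hprod : ∀ x, ∏ j ∈ A, φ x j = -∏ j ∈ A, x j := fun x => by
    rw [← mul_prod_erase A _ hj₀, ← mul_prod_erase A x hj₀,
      prod_congr rfl fun j hj => Function.update_of_ne (ne_of_mem_erase hj) _ x]
    simp [φ]
  have hsum : ∑ x ∈ F, ∏ j ∈ A, x j = ∑ x ∈ F, ∏ j ∈ A, φ x j :=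
    sum_nbij' φ φ (fun x hx => hF x hx j₀) (fun x hx => hF x hx j₀) (fun x _ => hφφ x)
      (fun x _ => hφφ x) (fun x _ => by rw [hφφ])
  rw [sum_congr rfl fun x _ => hprod x, sum_neg_distrib] at hsum
  linarith

lemma exp_mul_le_cosh_add_mul_sinh {x : ℝ} (hx : x = -1 ∨ x = 0 ∨ x = 1) (a : ℝ) :
    exp (x * a) ≤ cosh a + x * sinh a := by
  rcases hx with rfl | rfl | rfl
  · simp [← cosh_sub_sinh]
  · simp [one_le_cosh a]
  · simp [← cosh_add_sinh]

variable [Fintype ι]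

-- Bound `exp (x j * a j)` by the affine function `cosh (a j) + x j * sinh (a j)` of `x j` and
-- expand the product: every monomial `∏ j ∈ A, x j` with `A ≠ ∅` sums to zero over `F`.
lemma sum_exp_sum_mul_le {F : Finset (ι → ℝ)} (hval : ∀ x ∈ F, ∀ j, x j = -1 ∨ x j = 0 ∨ x j = 1)
    (hF : ∀ x ∈ F, ∀ j, Function.update x j (-x j) ∈ F) (a : ι → ℝ) :
    ∑ x ∈ F, exp (∑ j, x j * a j) ≤ #F * exp (∑ j, a j ^ 2 / 2) := calc
  ∑ x ∈ F, exp (∑ j, x j * a j) ≤ ∑ x ∈ F, ∏ j, (x j * sinh (a j) + cosh (a j)) := by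
    refine sum_le_sum fun x hx => ?_
    rw [exp_sum]
    refine prod_le_prod (fun j _ => (exp_pos _).le) fun j _ => ?_
    linarith [exp_mul_le_cosh_add_mul_sinh (hval x hx j) (a j)]
  _ = ∑ A ∈ univ.powerset, (∑ x ∈ F, ∏ j ∈ A, x j) *
        ((∏ j ∈ A, sinh (a j)) * ∏ j ∈ univ \ A, cosh (a j)) := by
    simp only [prod_add, prod_mul_distrib, sum_mul]
    rw [sum_comm]
    refine sum_congr rfl fun A _ => sum_congr rfl fun x _ => by ring
  _ = #F * ∏ j, cosh (a j) := by
    rw [sum_eq_single ∅ (fun A _ hA => by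
      rw [sum_prod_eq_zero_of_update_neg_mem hF (nonempty_iff_ne_empty.2 hA), zero_mul])
      (by simp)]
    simp
  _ ≤ #F * exp (∑ j, a j ^ 2 / 2) := by
    rw [exp_sum]
    gcongr with j
    exact cosh_le_exp_half_sq (a j)

end SignFlips

lemma signedRow_finite (n : ℕ) : (signedRow n).Finite :=
  (Set.Finite.pi fun _ => by simp :
    (Set.pi Set.univ fun _ : Fin n => ({-1, 0, 1} : Set ℝ)).Finite).subset
      fun x (hx : x ∈ signedRow n) i _ => hx.1 i

lemma update_neg_mem_signedRow {n : ℕ} {x : Fin n → ℝ} (hx : x ∈ signedRow n) (j : Fin n) :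
    Function.update x j (-x j) ∈ signedRow n := by
  have hzero : ∀ i, Function.update x j (-x j) i = 0 ↔ x i = 0 := fun i => by
    rcases eq_or_ne i j with rfl | hij <;> simp [*]
  refine ⟨fun i => ?_, ?_⟩
  · rcases eq_or_ne i j with rfl | hij
    · rcases hx.1 i with h | h | h <;> simp [h]
    · simpa [hij] using hx.1 i
  · rw [Nat.card_congr (Equiv.subtypeEquivRight hzero)]
    exact hx.2

lemma hasSubgaussianMGF_inner_signedRow {n : ℕ} (a : EuclideanSpace ℝ (Fin n)) :
    HasSubgaussianMGF (fun x => ⟪WithLp.toLp 2 x, a⟫) (‖a‖₊ ^ 2) (uniformOn (signedRow n)) := by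
  rw [← (signedRow_finite n).coe_toFinset]
  refine hasSubgaussianMGF_uniformOn_finset fun t => ?_
  have := sum_exp_sum_mul_le (F := (signedRow_finite n).toFinset)
    (fun x hx => by simpa using ((Set.Finite.mem_toFinset _).1 hx).1)
    (fun x hx j => by simpa using update_neg_mem_signedRow (by simpa using hx) j) (fun j => t * a j)
  convert this using 3 with x
  · simp only [PiLp.inner_apply, RCLike.inner_apply, conj_trivial, mul_sum]
    exact sum_congr rfl fun j _ => by ring
  · push_cast
    rw [EuclideanSpace.norm_sq_eq, sum_mul, sum_div]
    exact sum_congr rfl fun j _ => by rw [Real.norm_eq_abs, sq_abs]; ring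

section RandomMatrix

variable {ι κ : Type*} [Fintype ι] [Fintype κ] [DecidableEq κ]

lemma inner_toEuclideanLin_eq_sum (M : Matrix ι κ ℝ) (u : EuclideanSpace ℝ ι)
    (v : EuclideanSpace ℝ κ) :
    ⟪u, Matrix.toEuclideanLin M v⟫ = ∑ i, ⟪WithLp.toLp 2 (M i), u i • v⟫ := by
  simp only [PiLp.inner_apply, RCLike.inner_apply, conj_trivial, Matrix.toLpLin_apply,
    Matrix.mulVec, dotProduct, PiLp.smul_apply, smul_eq_mul, sum_mul]
  exact sum_congr rfl fun i _ => sum_congr rfl fun j _ => by ring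

lemma measureReal_inner_toEuclideanLin_ge_le {Ω : Type*} [MeasurableSpace Ω] {P : Measure Ω}
    {μ₀ : Measure (κ → ℝ)}
    (hμ₀ : ∀ a : EuclideanSpace ℝ κ,
      HasSubgaussianMGF (fun x => ⟪WithLp.toLp 2 x, a⟫) (‖a‖₊ ^ 2) μ₀)
    {M : Ω → Matrix ι κ ℝ} (hM : ∀ i, Measurable fun ω => M ω i)
    (hindep : iIndepFun (fun i ω => M ω i) P) (hlaw : ∀ i, P.map (fun ω => M ω i) = μ₀)
    (u : EuclideanSpace ℝ ι) (v : EuclideanSpace ℝ κ) {s : ℝ} (hs : 0 ≤ s) :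
    P.real {ω | s ≤ ⟪u, Matrix.toEuclideanLin (M ω) v⟫} ≤
      exp (-s ^ 2 / (2 * (‖u‖ * ‖v‖) ^ 2)) := by
  have hsub : ∀ i, HasSubgaussianMGF (fun ω => ⟪WithLp.toLp 2 (M ω i), u i • v⟫)
      (‖u i • v‖₊ ^ 2) P := fun i =>
    HasSubgaussianMGF.of_map (X := fun x => ⟪WithLp.toLp 2 x, u i • v⟫) (hM i).aemeasurable
      (hlaw i ▸ hμ₀ _)
  have hindep' : iIndepFun (fun i ω => ⟪WithLp.toLp 2 (M ω i), u i • v⟫) P :=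
    hindep.comp (fun i x => ⟪WithLp.toLp 2 x, u i • v⟫) fun i => by fun_prop
  have := HasSubgaussianMGF.measure_sum_ge_le_of_iIndepFun hindep' (s := univ)
    (fun i _ => hsub i) hs
  simp_rw [inner_toEuclideanLin_eq_sum]
  convert this using 4
  push_cast
  rw [mul_pow, EuclideanSpace.norm_sq_eq, sum_mul]
  exact sum_congr rfl fun i _ => by rw [norm_smul, mul_pow]

end RandomMatrix

lemma pnorm_eq_norm_toLp {ι : Type*} [Fintype ι] (x : ι → ℝ) : pnorm x = ‖WithLp.toLp 2 x‖ := by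
  simp [pnorm, EuclideanSpace.norm_eq]

lemma opNorm_le_norm_toEuclideanLin {m n : ℕ} (M : Matrix (Fin m) (Fin n) ℝ) :
    opNorm M ≤ ‖LinearMap.toContinuousLinearMap (Matrix.toEuclideanLin M)‖ := by
  set A := LinearMap.toContinuousLinearMap (Matrix.toEuclideanLin M)
  refine Real.iSup_le (fun v => ?_) (norm_nonneg A)
  calc pnorm (M.mulVec v) = ‖A (WithLp.toLp 2 v)‖ := pnorm_eq_norm_toLp _
    _ ≤ ‖A‖ * ‖WithLp.toLp 2 (v : Fin n → ℝ)‖ := A.le_opNorm _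
    _ = ‖A‖ := by rw [← pnorm_eq_norm_toLp, v.2, mul_one]

lemma measureReal_two_mul_lt_opNorm_le {m n : ℕ} {Ω : Type*} [MeasurableSpace Ω]
    {P : Measure Ω} {μ₀ : Measure (Fin n → ℝ)}
    (hμ₀ : ∀ a : EuclideanSpace ℝ (Fin n),
      HasSubgaussianMGF (fun x => ⟪WithLp.toLp 2 x, a⟫) (‖a‖₊ ^ 2) μ₀)
    {M : Ω → Matrix (Fin m) (Fin n) ℝ} (hM : ∀ i, Measurable fun ω => M ω i)
    (hindep : iIndepFun (fun i ω => M ω i) P) (hlaw : ∀ i, P.map (fun ω => M ω i) = μ₀)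
    {s : ℝ} (hs : 0 < s) :
    P.real {ω | 2 * s < opNorm (M ω)} ≤ 9 ^ m * 9 ^ n * exp (-s ^ 2 / 2) := by
  have := hindep.isProbabilityMeasure
  obtain ⟨Nu, hNu_sub, hNu_card, hNu⟩ :=
    exists_finset_isCover_sphere (E := EuclideanSpace ℝ (Fin m))
  obtain ⟨Nv, hNv_sub, hNv_card, hNv⟩ :=
    exists_finset_isCover_sphere (E := EuclideanSpace ℝ (Fin n))
  rw [finrank_euclideanSpace_fin] at hNu_card hNv_card
  set tail := fun u v => {ω | s ≤ ⟪u, Matrix.toEuclideanLin (M ω) v⟫}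
  have hcover : {ω | 2 * s < opNorm (M ω)} ⊆ ⋃ u ∈ Nu, ⋃ v ∈ Nv, tail u v := by
    intro ω hω
    by_contra hnot
    simp only [tail, Set.mem_iUnion, Set.mem_ofPred_eq, not_exists, not_le] at hnot
    have := ContinuousLinearMap.opNorm_le_two_mul_of_isCover
      (LinearMap.toContinuousLinearMap (Matrix.toEuclideanLin (M ω))) hNv hNu hNu_sub hs.le
      fun u hu v hv => (hnot u hu v hv).le
    linarith [opNorm_le_norm_toEuclideanLin (M ω), hω.out]
  have htail : ∀ u ∈ Nu, ∀ v ∈ Nv, P.real (tail u v) ≤ exp (-s ^ 2 / 2) := fun u hu v hv => by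
    simpa [tail, mem_sphere_zero_iff_norm.1 (hNu_sub hu), mem_sphere_zero_iff_norm.1 (hNv_sub hv)]
      using measureReal_inner_toEuclideanLin_ge_le hμ₀ hM hindep hlaw u v hs.le
  calc P.real {ω | 2 * s < opNorm (M ω)}
      ≤ ∑ u ∈ Nu, ∑ v ∈ Nv, P.real (tail u v) :=
        (measureReal_mono hcover (measure_ne_top _ _)).trans <|
          (measureReal_biUnion_finset_le _ _).trans <|
            sum_le_sum fun u _ => measureReal_biUnion_finset_le _ _
    _ ≤ ∑ u ∈ Nu, ∑ v ∈ Nv, exp (-s ^ 2 / 2) := sum_le_sum fun u hu => sum_le_sum (htail u hu)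
    _ = #Nu * #Nv * exp (-s ^ 2 / 2) := by simp [mul_assoc]
    _ ≤ 9 ^ m * 9 ^ n * exp (-s ^ 2 / 2) := by gcongr <;> exact_mod_cast ‹_›

lemma nine_pow_mul_nine_pow_mul_exp_le (n : ℕ) {t : ℝ} (ht : 24 ≤ t) :
    9 ^ n * 9 ^ n * exp (-(t * √n / 3) ^ 2 / 2) ≤ 2 * exp (-(1 / 36) * t ^ 2 * n) := by
  have h9 : (9 : ℝ) ^ n ≤ exp (8 * n) := by
    rw [mul_comm, exp_nat_mul]
    gcongr
    linarith [add_one_le_exp 8]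
  have hsq : (t * √n / 3) ^ 2 = t ^ 2 * n / 9 := by
    rw [div_pow, mul_pow, sq_sqrt n.cast_nonneg]; ring
  calc 9 ^ n * 9 ^ n * exp (-(t * √n / 3) ^ 2 / 2)
      ≤ exp (8 * n) * exp (8 * n) * exp (-(t ^ 2 * n / 9) / 2) := by rw [hsq]; gcongr
    _ = exp (-(1 / 36) * t ^ 2 * n - (t ^ 2 / 36 - 16) * n) := by
      rw [← exp_add, ← exp_add]; ring_nf
    _ ≤ exp (-(1 / 36) * t ^ 2 * n) := by
      gcongr
      have : 16 ≤ t ^ 2 / 36 := by nlinarith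
      nlinarith [n.cast_nonneg (α := ℝ)]
    _ ≤ 2 * exp (-(1 / 36) * t ^ 2 * n) := by linarith [exp_pos (-(1 / 36) * t ^ 2 * n)]

/-- there are absolute constants `C₃, c₃ > 0` such that for every even `n`,
every `m × n` random matrix `M` (`1 ≤ m ≤ n`) with independent rows uniform on the signed
rows, and every `t ≥ C₃`, `P(‖M‖ ≥ t √n) ≤ 2 exp(−c₃ t² n)`. -/
theorem stmt5 :
    ∃ C₃ c₃ : ℝ, 0 < C₃ ∧ 0 < c₃ ∧
    ∀ n m : ℕ, 0 < n → Even n → 1 ≤ m → m ≤ n →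
    ∀ (Ω : Type) (_ : MeasurableSpace Ω) (P : Measure Ω), IsProbabilityMeasure P →
    ∀ M : Ω → Matrix (Fin m) (Fin n) ℝ,
      (∀ i, Measurable fun ω => M ω i) →
      iIndepFun (fun i ω => M ω i) P →
      (∀ i, Measure.map (fun ω => M ω i) P = uniformOn (signedRow n)) →
    ∀ t : ℝ, C₃ ≤ t →
      P {ω | t * Real.sqrt n ≤ opNorm (M ω)} ≤
        ENNReal.ofReal (2 * Real.exp (-c₃ * t ^ 2 * n)) := by
  refine ⟨24, 1 / 36, by norm_num, by norm_num, ?_⟩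
  intro n m hn _ _ hmn Ω _ P _ M hM hindep hlaw t ht
  set s := t * √n / 3 with hs_def
  have hs : 0 < s := by
    have : (0 : ℝ) < n := by exact_mod_cast hn
    positivity
  have hsub : {ω | t * √n ≤ opNorm (M ω)} ⊆ {ω | 2 * s < opNorm (M ω)} := fun ω hω => by
    simp only [Set.mem_ofPred_eq] at hω ⊢
    linarith
  rw [← ofReal_measureReal]
  refine ENNReal.ofReal_le_ofReal ?_
  calc P.real {ω | t * √n ≤ opNorm (M ω)}
      ≤ P.real {ω | 2 * s < opNorm (M ω)} := measureReal_mono hsub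
    _ ≤ 9 ^ m * 9 ^ n * exp (-s ^ 2 / 2) := measureReal_two_mul_lt_opNorm_le
        hasSubgaussianMGF_inner_signedRow hM hindep hlaw hs
    _ ≤ 9 ^ n * 9 ^ n * exp (-s ^ 2 / 2) := by gcongr; norm_num
    _ ≤ 2 * exp (-(1 / 36) * t ^ 2 * n) := nine_pow_mul_nine_pow_mul_exp_le n ht

end
end

section
/- Let δ, ρ ∈ (0,1). Then for any non-almost-constant vector v ∈ S^{n-1}, i.e. v ∈ S^{n-1} \ Cons(δ,ρ), there exist disjoint subsets σ₁, σ₂ ⊂ [n] with |σ₁|, |σ₂| ≥ δn/8 such that ρ/√(2n) ≤ |v_i − v_j| ≤ 6/√(δn) for all i ∈ σ₁ and all j ∈ σ₂. -/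
open Real

noncomputable section

/-- A vector `v` is almost-constant (with parameters `δ, ρ`) if some `λ ∈ ℝ` satisfies
`|v i − λ| ≤ ρ/√n` for at least `(1−δ)n` coordinates `i`. -/
def almostConst {n : ℕ} (δ ρ : ℝ) (v : Fin n → ℝ) : Prop :=
  ∃ lam : ℝ, (1 - δ) * n ≤ (Nat.card {i : Fin n // |v i - lam| ≤ ρ / Real.sqrt n} : ℝ)

/-!
Discard the at most `δn/4` coordinates with `|v i| ≥ 2/√(δn)` (Chebyshev), and cut the
remaining ones at the value `t` below which lie `⌈δn/8⌉` of them. Since `v` is not almost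
constant, the window `|v i - t| ≤ ρ/√n` holds fewer than `(1-δ)n` coordinates, so more than
`5δn/8` of the kept coordinates lie above `t + ρ/√(2n)`. All kept coordinates are bounded by
`2/√(δn)`, which gives the upper bound on the differences.
-/

open Finset

section

variable {ι : Type*}

theorem sum_sq_eq_one_of_pnorm_eq_one [Fintype ι] {v : ι → ℝ} (hv : pnorm v = 1) :
    ∑ i, v i ^ 2 = 1 :=
  Real.sqrt_eq_one.mp hv

theorem card_filter_le_abs_mul_sq_le_sum_sq (s : Finset ι) (x : ι → ℝ) {c : ℝ} (hc : 0 ≤ c) :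
    #{i ∈ s | c ≤ |x i|} * c ^ 2 ≤ ∑ i ∈ s, x i ^ 2 := by
  classical
  calc #{i ∈ s | c ≤ |x i|} * c ^ 2 ≤ ∑ i ∈ s with c ≤ |x i|, x i ^ 2 := by
        rw [← nsmul_eq_mul]
        refine card_nsmul_le_sum _ _ _ fun i hi ↦ ?_
        rw [← sq_abs (x i)]
        exact pow_le_pow_left₀ hc (mem_filter.mp hi).2 2
    _ ≤ ∑ i ∈ s, x i ^ 2 := sum_le_sum_of_subset_of_nonneg (filter_subset _ _) fun _ _ _ ↦ sq_nonneg _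

theorem card_sub_inv_sq_le_card_filter_abs_lt [Fintype ι] {v : ι → ℝ} (hv : pnorm v = 1)
    {c : ℝ} (hc : 0 < c) : (Fintype.card ι : ℝ) - (c ^ 2)⁻¹ ≤ #{i | |v i| < c} := by
  classical
  have hbig := card_filter_le_abs_mul_sq_le_sum_sq univ v hc.le
  rw [sum_sq_eq_one_of_pnorm_eq_one hv, ← le_div_iff₀ (by positivity), one_div] at hbig
  have hsplit := card_filter_add_card_filter_not (s := univ) (fun i ↦ |v i| < c)
  simp only [not_lt, card_univ] at hsplit
  have : (#{i | |v i| < c} : ℝ) + #{i | c ≤ |v i|} = Fintype.card ι := by exact_mod_cast hsplit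
  linarith

theorem exists_quantile {α : Type*} [LinearOrder α] (s : Finset ι) (f : ι → α) {k : ℕ}
    (hk : 0 < k) (hks : k ≤ #s) :
    ∃ t, k ≤ #{i ∈ s | f i ≤ t} ∧ #{i ∈ s | f i < t} < k := by
  classical
  set T := {j ∈ s | k ≤ #{i ∈ s | f i ≤ f j}}
  have hT : T.Nonempty := by
    obtain ⟨j, hj, hmax⟩ := exists_max_image s f (card_pos.mp (hk.trans_le hks))
    exact ⟨j, mem_filter.mpr ⟨hj, hks.trans (card_le_card fun i hi ↦ mem_filter.mpr ⟨hi, hmax i hi⟩)⟩⟩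
  obtain ⟨j₀, hj₀, hmin⟩ := exists_min_image T f hT
  refine ⟨f j₀, (mem_filter.mp hj₀).2, ?_⟩
  by_contra! hbelow
  obtain ⟨j₁, hj₁, hmax⟩ := exists_max_image {i ∈ s | f i < f j₀} f (card_pos.mp (hk.trans_le hbelow))
  have hj₁T : j₁ ∈ T := mem_filter.mpr ⟨(mem_filter.mp hj₁).1,
    hbelow.trans (card_le_card fun i hi ↦ mem_filter.mpr ⟨(mem_filter.mp hi).1, hmax i hi⟩)⟩
  exact (hmin j₁ hj₁T).not_gt (mem_filter.mp hj₁).2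

theorem card_le_card_filter_lt_add_card_filter_abs_sub_le_add_card_filter_add_le
    (s : Finset ι) (f : ι → ℝ) (t : ℝ) {ε r : ℝ} (hεr : ε ≤ r) :
    #s ≤ #{i ∈ s | f i < t} + #{i ∈ s | |f i - t| ≤ r} + #{i ∈ s | t + ε ≤ f i} := by
  classical
  have hcover : s ⊆ {i ∈ s | f i < t} ∪ {i ∈ s | |f i - t| ≤ r} ∪ {i ∈ s | t + ε ≤ f i} := by
    intro i hi
    simp only [mem_union, mem_filter, hi, true_and]
    by_cases hlow : f i < t
    · exact Or.inl (Or.inl hlow)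
    by_cases hhigh : t + ε ≤ f i
    · exact Or.inr hhigh
    exact Or.inl (Or.inr (abs_le.mpr ⟨by linarith, by linarith⟩))
  grw [card_le_card hcover, card_union_le, card_union_le]

theorem exists_separated_of_card_window_lt (s : Finset ι) (f : ι → ℝ) {k : ℕ} (hk : 0 < k)
    (hks : k ≤ #s) {ε r m : ℝ} (hεr : ε ≤ r) (hm : ∀ t, (#{i ∈ s | |f i - t| ≤ r} : ℝ) < m) :
    ∃ σ₁ σ₂ : Finset ι, σ₁ ⊆ s ∧ σ₂ ⊆ s ∧ k ≤ #σ₁ ∧ (#s : ℝ) + 1 < k + m + #σ₂ ∧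
      ∀ i ∈ σ₁, ∀ j ∈ σ₂, f i + ε ≤ f j := by
  classical
  obtain ⟨t, hle, hlt⟩ := exists_quantile s f hk hks
  refine ⟨{i ∈ s | f i ≤ t}, {i ∈ s | t + ε ≤ f i}, filter_subset _ _, filter_subset _ _, hle,
    ?_, fun i hi j hj ↦ by linarith [(mem_filter.mp hi).2, (mem_filter.mp hj).2]⟩
  have hcover := card_le_card_filter_lt_add_card_filter_abs_sub_le_add_card_filter_add_le s f t hεr
  have hlt' : (#{i ∈ s | f i < t} : ℝ) + 1 ≤ k := by exact_mod_cast hlt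
  have hcover' : (#s : ℝ) ≤ #{i ∈ s | f i < t} + #{i ∈ s | |f i - t| ≤ r} +
      #{i ∈ s | t + ε ≤ f i} := by exact_mod_cast hcover
  linarith [hm t]

end

theorem card_filter_abs_sub_le_lt_of_not_almostConst {n : ℕ} {δ ρ : ℝ} {v : Fin n → ℝ}
    (hna : ¬ almostConst δ ρ v) (s : Finset (Fin n)) (t : ℝ) :
    (#{i ∈ s | |v i - t| ≤ ρ / √n} : ℝ) < (1 - δ) * n := by
  classical
  have hsub : #{i ∈ s | |v i - t| ≤ ρ / √n} ≤ #{i | |v i - t| ≤ ρ / √n} :=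
    card_le_card (filter_subset_filter _ (subset_univ s))
  by_contra! h
  refine hna ⟨t, ?_⟩
  rw [Nat.card_eq_fintype_card, Fintype.card_subtype]
  exact h.trans (by exact_mod_cast hsub)

theorem stmt7_general {n : ℕ} (δ ρ : ℝ) (hδ : 0 < δ) (hδ1 : δ < 1) (hρ : 0 < ρ)
    (v : Fin n → ℝ) (hv : pnorm v = 1) (hna : ¬ almostConst δ ρ v) :
    ∃ σ₁ σ₂ : Finset (Fin n), Disjoint σ₁ σ₂ ∧
      δ * n / 8 ≤ (σ₁.card : ℝ) ∧ δ * n / 8 ≤ (σ₂.card : ℝ) ∧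
      ∀ i ∈ σ₁, ∀ j ∈ σ₂,
        ρ / Real.sqrt (2 * n) ≤ |v i - v j| ∧ |v i - v j| ≤ 6 / Real.sqrt (δ * n) := by
  classical
  obtain rfl | hn := Nat.eq_zero_or_pos n
  · exact absurd ⟨0, by simp⟩ hna
  have hδn : 0 < δ * n := by positivity
  set M := 2 / √(δ * n)
  set I : Finset (Fin n) := {i | |v i| < M}
  have hI : n - δ * n / 4 ≤ (#I : ℝ) := by
    have hM : (M ^ 2)⁻¹ = δ * n / 4 := by
      rw [div_pow, sq_sqrt hδn.le]
      field_simp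
      norm_num
    simpa [hM] using card_sub_inv_sq_le_card_filter_abs_lt hv (c := M) (by positivity)
  set k := ⌈δ * n / 8⌉₊
  have hk : 0 < k := Nat.ceil_pos.mpr (by positivity)
  have hk_lt : (k : ℝ) < δ * n / 8 + 1 := Nat.ceil_lt_add_one (by positivity)
  have hkI : k ≤ #I := Nat.ceil_le.mpr (by nlinarith)
  have hε₀ : 0 < ρ / √(2 * n) := by positivity
  have hε : ρ / √(2 * n) ≤ ρ / √n :=
    div_le_div_of_nonneg_left hρ.le (by positivity) (sqrt_le_sqrt (by linarith))
  obtain ⟨σ₁, σ₂, hσ₁, hσ₂, hk₁, hk₂, hgap⟩ := exists_separated_of_card_window_lt I v hk hkI hε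
    (card_filter_abs_sub_le_lt_of_not_almostConst hna I)
  have hbound : ∀ i ∈ I, |v i| < M := fun i hi ↦ (mem_filter.mp hi).2
  refine ⟨σ₁, σ₂, disjoint_left.mpr fun i hi₁ hi₂ ↦ ?_, (Nat.le_ceil _).trans (by exact_mod_cast hk₁),
    by linarith, fun i hi j hj ↦ ⟨?_, ?_⟩⟩
  · linarith [hgap i hi₁ i hi₂]
  · rw [abs_sub_comm, abs_of_nonneg (by linarith [hgap i hi j hj])]
    linarith [hgap i hi j hj]
  · calc |v i - v j| ≤ |v i| + |v j| := abs_sub _ _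
      _ ≤ M + M := by linarith [hbound i (hσ₁ hi), hbound j (hσ₂ hj)]
      _ ≤ 6 / √(δ * n) := by rw [← add_div]; gcongr; norm_num

/-- for `δ, ρ ∈ (0,1)` and any non-almost-constant unit vector `v`, there
are disjoint subsets `σ₁, σ₂ ⊂ [n]` with `|σ₁|, |σ₂| ≥ δn/8` such that
`ρ/√(2n) ≤ |v i − v j| ≤ 6/√(δn)` for all `i ∈ σ₁`, `j ∈ σ₂`. -/
theorem stmt7 {n : ℕ} (δ ρ : ℝ) (hδ : 0 < δ) (hδ1 : δ < 1) (hρ : 0 < ρ) (hρ1 : ρ < 1)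
    (v : Fin n → ℝ) (hv : pnorm v = 1) (hna : ¬ almostConst δ ρ v) :
    ∃ σ₁ σ₂ : Finset (Fin n), Disjoint σ₁ σ₂ ∧
      δ * n / 8 ≤ (σ₁.card : ℝ) ∧ δ * n / 8 ≤ (σ₂.card : ℝ) ∧
      ∀ i ∈ σ₁, ∀ j ∈ σ₂,
        ρ / Real.sqrt (2 * n) ≤ |v i - v j| ∧ |v i - v j| ≤ 6 / Real.sqrt (δ * n) :=
  stmt7_general δ ρ hδ hδ1 hρ v hv hna
end
end

section
/- Let δ, ρ ∈ (0,1). Then every non-almost-constant unit vector v ∈ S^{n-1} \ Cons(δ,ρ) satisfies ‖D(v)‖₂ ≥ (δρ/16)√n. -/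
open Real

noncomputable section

/-- `D(v)`: the vector in `ℝ^{n(n-1)/2}` whose `(i,j)`-coordinate is `v i - v j`
for `i < j`. -/
def Dvec {n : ℕ} (v : Fin n → ℝ) : {p : Fin n × Fin n // p.1 < p.2} → ℝ :=
  fun p => v p.1.1 - v p.1.2

/-! With `m` the mean of `v`, `‖D v‖² = n · ∑ i, (v i - m)²` (Lagrange's identity, centred at
the mean). If `v` is not almost constant, taking `λ = m` shows that more than `δn` coordinates lie
farther than `ρ/√n` from `m`, so `∑ i, (v i - m)² ≥ δρ²`. Hence `‖D v‖ ≥ √δ ρ √n ≥ (δρ/16) √n`. -/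

open Finset
open scoped BigOperators

theorem Fintype.sum_sum_eq_two_nsmul_sum_lt {ι M : Type*} [Fintype ι] [LinearOrder ι]
    [AddCommMonoid M] (f : ι → ι → M) (hsymm : ∀ i j, f i j = f j i) (hdiag : ∀ i, f i i = 0) :
    ∑ i, ∑ j, f i j = 2 • ∑ p : {p : ι × ι // p.1 < p.2}, f p.1.1 p.1.2 := by
  have hlt : ∑ p : {p : ι × ι // p.1 < p.2}, f p.1.1 p.1.2
      = ∑ i, ∑ j, if i < j then f i j else 0 := by
    rw [← Fintype.sum_prod_type', ← sum_filter,
      sum_subtype (p := fun q : ι × ι => q.1 < q.2) _ (fun q => by simp)]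
  have hsplit : ∀ i j, f i j = (if i < j then f i j else 0) + if j < i then f j i else 0 := by
    intro i j
    rcases lt_trichotomy i j with h | rfl | h
    · simp [h, h.not_gt]
    · simp [hdiag]
    · simp [h, h.not_gt, hsymm i j]
  conv_lhs => rw [Fintype.sum_congr _ _ fun i => Fintype.sum_congr _ _ (hsplit i)]
  simp only [sum_add_distrib]
  rw [sum_comm (f := fun i j => if j < i then f j i else 0), hlt, two_nsmul]

section Centred

variable {ι : Type*} [Fintype ι]

theorem sum_sum_sub_sq_eq (v : ι → ℝ) (c : ℝ) :
    ∑ i, ∑ j, (v i - v j) ^ 2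
      = 2 * Fintype.card ι * ∑ i, (v i - c) ^ 2 - 2 * (∑ i, (v i - c)) ^ 2 := by
  have h : ∀ i j, (v i - v j) ^ 2 = (v i - c) ^ 2 + (v j - c) ^ 2 - 2 * ((v i - c) * (v j - c)) :=
    fun i j => by ring
  simp only [h, sum_add_distrib, sum_sub_distrib, sum_const, card_univ, nsmul_eq_mul,
    ← mul_sum, ← sum_mul]
  ring

theorem sum_sum_sub_sq_eq_expect (v : ι → ℝ) :
    ∑ i, ∑ j, (v i - v j) ^ 2 = 2 * Fintype.card ι * ∑ i, (v i - 𝔼 j, v j) ^ 2 := by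
  rw [sum_sum_sub_sq_eq v (𝔼 j, v j), sum_sub_distrib, sum_const, card_univ, nsmul_eq_mul,
    Fintype.card_mul_expect, sub_self]
  ring

end Centred

theorem lt_card_far_of_not_almostConst {n : ℕ} {δ ρ : ℝ} {v : Fin n → ℝ}
    (h : ¬ almostConst δ ρ v) (lam : ℝ) :
    δ * n < #{i | ρ / √n < |v i - lam|} := by
  have hnear := not_le.mp (not_exists.mp h lam)
  rw [Nat.card_eq_fintype_card, Fintype.card_subtype] at hnear
  have hnear_add_far :=
    card_filter_add_card_filter_not (s := univ) (fun i : Fin n => |v i - lam| ≤ ρ / √n)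
  simp only [not_le, card_univ, Fintype.card_fin] at hnear_add_far
  have hn : (n : ℝ) = _ := congrArg (Nat.cast (R := ℝ)) hnear_add_far.symm
  push_cast at hn
  linarith

theorem mul_sq_le_sum_sq_sub_of_not_almostConst {n : ℕ} {δ ρ : ℝ} {v : Fin n → ℝ}
    (hρ : 0 ≤ ρ) (h : ¬ almostConst δ ρ v) (lam : ℝ) :
    δ * ρ ^ 2 ≤ ∑ i, (v i - lam) ^ 2 := by
  set far := ({i | ρ / √n < |v i - lam|} : Finset (Fin n))
  have hcard : δ * n < #far := lt_card_far_of_not_almostConst h lam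
  have hfar_le : (#far : ℝ) ≤ n := by
    exact_mod_cast (card_le_univ far).trans_eq (Fintype.card_fin n)
  have hn : (n : ℝ) ≠ 0 := by
    rintro hn
    rw [hn] at hcard hfar_le
    linarith
  have hterm : ∀ i ∈ far, ρ ^ 2 / n ≤ (v i - lam) ^ 2 := by
    intro i hi
    have hlt : ρ / √n < |v i - lam| := (mem_filter.mp hi).2
    have := pow_le_pow_left₀ (by positivity) hlt.le 2
    rwa [div_pow, Real.sq_sqrt (Nat.cast_nonneg n), sq_abs] at this
  calc δ * ρ ^ 2 = δ * n * (ρ ^ 2 / n) := by field_simp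
    _ ≤ #far * (ρ ^ 2 / n) := by gcongr
    _ ≤ ∑ i ∈ far, (v i - lam) ^ 2 := by rw [← nsmul_eq_mul]; exact card_nsmul_le_sum _ _ _ hterm
    _ ≤ ∑ i, (v i - lam) ^ 2 :=
      sum_le_sum_of_subset_of_nonneg (subset_univ _) fun _ _ _ => sq_nonneg _

theorem sum_Dvec_sq_eq {n : ℕ} (v : Fin n → ℝ) :
    ∑ p, Dvec v p ^ 2 = n * ∑ i, (v i - 𝔼 j, v j) ^ 2 := by
  have h := Fintype.sum_sum_eq_two_nsmul_sum_lt (fun i j => (v i - v j) ^ 2)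
    (fun i j => by ring) (fun i => by simp)
  rw [sum_sum_sub_sq_eq_expect, Fintype.card_fin, two_nsmul] at h
  simp only [Dvec]
  linarith

theorem stmt8_general {n : ℕ} (δ ρ : ℝ) (hδ : 0 < δ) (hδ1 : δ < 1) (hρ : 0 < ρ)
    (v : Fin n → ℝ) (hna : ¬ almostConst δ ρ v) :
    δ * ρ / 16 * Real.sqrt n ≤ pnorm (Dvec v) := by
  have hspread := mul_sq_le_sum_sq_sub_of_not_almostConst hρ.le hna (𝔼 j, v j)
  have hconst : (δ * ρ / 16) ^ 2 ≤ δ * ρ ^ 2 := by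
    have : δ ^ 2 ≤ 256 * δ := by nlinarith
    nlinarith [sq_nonneg ρ]
  refine Real.le_sqrt_of_sq_le ?_
  rw [sum_Dvec_sq_eq, mul_pow, Real.sq_sqrt (Nat.cast_nonneg n), mul_comm (n : ℝ)]
  gcongr
  linarith

/-- for `δ, ρ ∈ (0,1)`, every non-almost-constant unit vector `v` satisfies
`‖D(v)‖₂ ≥ (δρ/16)√n`. -/
theorem stmt8 {n : ℕ} (δ ρ : ℝ) (hδ : 0 < δ) (hδ1 : δ < 1) (hρ : 0 < ρ) (hρ1 : ρ < 1)
    (v : Fin n → ℝ) (hv : pnorm v = 1) (hna : ¬ almostConst δ ρ v) :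
    δ * ρ / 16 * Real.sqrt n ≤ pnorm (Dvec v) :=
  stmt8_general δ ρ hδ hδ1 hρ v hna

end
end
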